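/- For every z ∈ M, the identity S^R_{z^2,2}(x) = x · (S^R_{z,1}(x) ∗ S^R_{z,1}(−x)) holds in 𝔥_{M,∗}⟦x⟧. -/

import Mathlib

open scoped BigOperators

/-- `𝔥_M`: the noncommutative polynomial ring `ℚ⟨e_z : z ∈ M⟩`, realized as the
monoid algebra of the free monoid on `M` over `ℚ` (concatenation product). -/
abbrev H (M : Type*) [MonoidWithZero M] : Type _ := MonoidAlgebra ℚ (FreeMonoid M)

variable {M : Type*} [MonoidWithZero M]

/-- The word `e_{a_1} ⋯ e_{a_k}` as an element of `𝔥_M`. -/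
noncomputable def wrd (l : List M) : H M := MonoidAlgebra.single (FreeMonoid.ofList l) 1

/-- The generator `e_z`. -/
noncomputable def e (z : M) : H M := wrd [z]

/-- The harmonic product on words, defined by the recursion
`e_a w ∗ e_b w' = e_{ab}(w ∗ e_b w' + e_a w ∗ w' − e_0 (w ∗ w'))`. -/
noncomputable def har : List M → List M → H M
  | [], w => wrd w
  | a :: w, [] => wrd (a :: w)
  | a :: w, b :: w' =>
      wrd [a * b] * (har w (b :: w') + har (a :: w) w' - wrd [0] * har w w')
termination_by w w' => w.length + w'.length
decreasing_by all_goals (simp; try omega)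

/-- The harmonic product `∗` on `𝔥_M`, extended ℚ-bilinearly from words. -/
noncomputable def hmul (f g : H M) : H M :=
  Finsupp.sum f.coeff fun w a => Finsupp.sum g.coeff fun w' b =>
    (a * b) • har (FreeMonoid.toList w) (FreeMonoid.toList w')

/-- Powers with respect to the harmonic product. -/
noncomputable def hpow (a : H M) : ℕ → H M
  | 0 => 1
  | n + 1 => hmul a (hpow a n)

/-- `s_{z,k} = e_z e_0^{k-1}` (concatenation product). -/
noncomputable def s (z : M) (k : ℕ) : H M := e z * (e 0) ^ (k - 1)

/-- `sprod z k n = s_{z^n,k} s_{z^{n-1},k} ⋯ s_{z,k}` (concatenation), `sprod z k 0 = 1`. -/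
noncomputable def sprod (z : M) (k : ℕ) : ℕ → H M
  | 0 => 1
  | n + 1 => s (z ^ (n + 1)) k * sprod z k n

/-- Cauchy product of power series over `(𝔥_M, ∗)`, represented as coefficient sequences. -/
noncomputable def hmulPS (f g : ℕ → H M) : ℕ → H M :=
  fun n => ∑ i ∈ Finset.range (n + 1), hmul (f i) (g (n - i))

/-- Powers of a power series w.r.t. the harmonic product. -/
noncomputable def psPow (f : ℕ → H M) : ℕ → (ℕ → H M)
  | 0 => fun n => if n = 0 then 1 else 0
  | m + 1 => hmulPS f (psPow f m)

/-- `exp_∗` of a power series with zero constant term (coefficientwise). -/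
noncomputable def expPS (f : ℕ → H M) : ℕ → H M :=
  fun n => ∑ m ∈ Finset.range (n + 1), ((Nat.factorial m : ℚ))⁻¹ • psPow f m n

/-- Coefficients of the formal sine `S_z(x) = Σ_{n≥0} s_{z^n,2}⋯s_{z,2} x^{2n+1}`. -/
noncomputable def Scoef (z : M) (d : ℕ) : H M :=
  if d % 2 = 1 then sprod z 2 (d / 2) else 0

/-- Coefficients of the formal cosine `C_z(x) = S_z'(x)`. -/
noncomputable def Ccoef (z : M) (d : ℕ) : H M := ((d : ℚ) + 1) • Scoef z (d + 1)

/-- `w_{z,n} = (2n+1)! s_{z^n,2} ⋯ s_{z,2}`. -/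
noncomputable def wz (z : M) (n : ℕ) : H M := ((Nat.factorial (2 * n + 1) : ℚ)) • sprod z 2 n

/-- `g_{z,m,n} = w_{z,m+n} − w_{z,m} ∗ w_{z,n}`. -/
noncomputable def gz (z : M) (m n : ℕ) : H M := wz z (m + n) - hmul (wz z m) (wz z n)

/-- Coefficient of `x^i y^j` in `A_z(x,y) = S_z(x+y) − S_z(x) ∗ C_z(y) − C_z(x) ∗ S_z(y)`. -/
noncomputable def Acoef (z : M) (i j : ℕ) : H M :=
  (Nat.choose (i + j) i : ℚ) • Scoef z (i + j)
    - hmul (Scoef z i) (Ccoef z j) - hmul (Ccoef z i) (Scoef z j)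

/-- Coefficient of `x^d` in `P_z(x) = −w_{z,1} ∗ S_z(x)^{∗2} + C_z(x)^{∗2}`. -/
noncomputable def Pcoef (z : M) (d : ℕ) : H M :=
  -(hmul (wz z 1) (hmulPS (Scoef z) (Scoef z) d)) + hmulPS (Ccoef z) (Ccoef z) d


/-- Coefficients of `S^T_{z,k}(x) = Σ_{n≥0} s_{z^n,k}⋯s_{z,k} x^{(n+1)k−1}`. -/
noncomputable def STcoef (z : M) (k : ℕ) (d : ℕ) : H M :=
  if k ∣ (d + 1) then sprod z k ((d + 1) / k - 1) else 0

/-- Coefficients of the series `Σ_{n≥1} (s_{z^n,nk}/n) x^{nk}`. -/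
noncomputable def gexp (z : M) (k : ℕ) (d : ℕ) : H M :=
  if d ≠ 0 ∧ k ∣ d then (((d / k : ℕ) : ℚ))⁻¹ • s (z ^ (d / k)) d else 0

/-- Coefficients of `S^R_{z,k}(x) = x^{k−1} exp_∗(Σ_{n≥1} (s_{z^n,nk}/n) x^{nk})`. -/
noncomputable def SRcoef (z : M) (k : ℕ) (d : ℕ) : H M :=
  if k - 1 ≤ d then expPS (gexp z k) (d - (k - 1)) else 0

/-- Admissible words spanning `𝔥^0_M = ℚ ⊕ ⨁_{a≠0,1} 𝔥_M e_a ⊕ ⨁_{a≠0,b≠1} e_a 𝔥_M e_b`. -/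
def adm0 (l : List M) : Prop :=
  l = [] ∨ ∃ h : l ≠ [],
    (l.getLast h ≠ 0 ∧ l.getLast h ≠ 1) ∨ (l.head h ≠ 0 ∧ l.getLast h ≠ 1)

/-- The subspace `𝔥^0_M`. -/
noncomputable def H0 (M : Type*) [MonoidWithZero M] : Submodule ℚ (H M) :=
  Submodule.span ℚ {x | ∃ l : List M, adm0 l ∧ x = wrd l}

/-- Words spanning `𝔥^1_M = ⨁_{m≥0} 𝔥^0_M e_1^m`. -/
def adm1 (l : List M) : Prop :=
  ∃ (l₀ : List M) (m : ℕ), adm0 l₀ ∧ l = l₀ ++ List.replicate m 1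

/-- The subspace `𝔥^1_M`. -/
noncomputable def H1 (M : Type*) [MonoidWithZero M] : Submodule ℚ (H M) :=
  Submodule.span ℚ {x | ∃ l : List M, adm1 l ∧ x = wrd l}

/-- `ℓ(w)`: the number of letters `e_a` of a word with `a ≠ 0`. -/
noncomputable def lcount (l : List M) : ℕ :=
  l.countP fun a => @decide (a ≠ 0) (Classical.propDecidable _)

/-- `ℱ_d 𝔥^0_M`: span of admissible words `w` with `ℓ(w) ≤ d`. -/
noncomputable def F0 (M : Type*) [MonoidWithZero M] (d : ℕ) : Submodule ℚ (H M) :=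
  Submodule.span ℚ {x | ∃ l : List M, adm0 l ∧ lcount l ≤ d ∧ x = wrd l}

/-- The ideal of `(𝔥_M, ∗)` generated by a set. -/
noncomputable def genIdeal (S : Set (H M)) : Submodule ℚ (H M) :=
  Submodule.span ℚ {x | ∃ a y, y ∈ S ∧ x = hmul a y}

/-- The product on the polynomial ring `𝔥_{M,∗}[S,T]` (represented as
finitely supported coefficient families indexed by monomials `S^i T^j`). -/
noncomputable def polyMul2 (f g : (ℕ × ℕ) →₀ H M) : (ℕ × ℕ) →₀ H M :=
  Finsupp.sum f fun p a => Finsupp.sum g fun q b => Finsupp.single (p + q) (hmul a b)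

/-- `φ : 𝔥^0_{M,∗}[S,T] → 𝔥_{M,∗}`, `Σ w_{ij} S^i T^j ↦ Σ w_{ij} ∗ e_0^{∗i} ∗ e_1^{∗j}`. -/
noncomputable def phi2 (f : (ℕ × ℕ) →₀ H M) : H M :=
  Finsupp.sum f fun p a => hmul a (hmul (hpow (e 0) p.1) (hpow (e 1) p.2))

/-- The product on `𝔥_{M,∗}[S]`. -/
noncomputable def polyMul1 (f g : ℕ →₀ H M) : ℕ →₀ H M :=
  Finsupp.sum f fun p a => Finsupp.sum g fun q b => Finsupp.single (p + q) (hmul a b)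

/-- `φ₁ : 𝔥^1_{M,∗}[S] → 𝔥_{M,∗}`, `Σ w_i S^i ↦ Σ w_i ∗ e_0^{∗i}`. -/
noncomputable def phi1 (f : ℕ →₀ H M) : H M :=
  Finsupp.sum f fun i a => hmul a (hpow (e 0) i)

/-!
The harmonic product is associative: by induction on the total length of three words, since
the associator of `e_a p, e_b q, e_c r` is `e_{abc}` times a combination of associators of
shorter words. Two words whose letters commute in `M` also commute for `∗`. Hence `𝔥_{M,∗}⟦x⟧`
is a `ℚ`-algebra in which the partial sums of `exp` satisfy `exp(F + G) = exp F ∗ exp G` up to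
order `x^N` whenever `F` and `G` commute and have no constant term. The exponents of
`S^R_{z,1}(x)` and `S^R_{z,1}(-x)` are such a pair, and their sum
`Σ (1 + (-1)^n) s_{z^n,n}/n x^n = Σ_m s_{z^{2m},2m}/m x^{2m}`
is the exponent of `S^R_{z²,2}(x)/x`.
-/
open Finset

lemma wrd_cons (a : M) (l : List M) : wrd (a :: l) = e a * wrd l := by
  simp only [e, wrd, MonoidAlgebra.single_mul_single, one_mul]
  rfl

lemma single_eq_smul_wrd (w : FreeMonoid M) (c : ℚ) :
    MonoidAlgebra.single w c = c • wrd (FreeMonoid.toList w) := by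
  simp [wrd, MonoidAlgebra.smul_single]

lemma e_mul_single (a : M) (w : FreeMonoid M) (c : ℚ) :
    e a * MonoidAlgebra.single w c = c • wrd (a :: FreeMonoid.toList w) := by
  rw [single_eq_smul_wrd, mul_smul_comm, wrd_cons]

lemma har_nil_left (v : List M) : har [] v = wrd v := by
  rw [har]

lemma har_nil_right (u : List M) : har u [] = wrd u := by
  cases u <;> rw [har]

lemma har_cons_cons (a b : M) (u v : List M) :
    har (a :: u) (b :: v) = e (a * b) * (har u (b :: v) + har (a :: u) v - e 0 * har u v) := by
  rw [har]
  rfl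

lemma har_zero_cons (u v : List M) : har (0 :: u) v = e 0 * har u v := by
  induction v with
  | nil => rw [har_nil_right, har_nil_right, wrd_cons]
  | cons b v ih => rw [har_cons_cons, ih, zero_mul, add_sub_cancel_right]

lemma har_cons_zero (u v : List M) : har u (0 :: v) = e 0 * har u v := by
  induction u with
  | nil => rw [har_nil_left, har_nil_left, wrd_cons]
  | cons a u ih => rw [har_cons_cons, ih, mul_zero, add_sub_cancel_left]

lemma har_comm : (u v : List M) → (∀ a ∈ u, ∀ b ∈ v, Commute a b) → har u v = har v u
  | [], v, _ => by rw [har_nil_left, har_nil_right]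
  | a :: u, [], _ => by rw [har_nil_left, har_nil_right]
  | a :: u, b :: v, h => by
    rw [har_cons_cons, har_cons_cons, (h a (by simp) b (by simp)).eq,
      har_comm u (b :: v) fun x hx y hy => h x (by simp [hx]) y hy,
      har_comm (a :: u) v fun x hx y hy => h x hx y (by simp [hy]),
      har_comm u v fun x hx y hy => h x (by simp [hx]) y (by simp [hy]), add_comm (har _ u)]
termination_by u v => u.length + v.length

lemma hmul_single_single (u v : FreeMonoid M) (a b : ℚ) :
    hmul (MonoidAlgebra.single u a) (MonoidAlgebra.single v b)
      = (a * b) • har (FreeMonoid.toList u) (FreeMonoid.toList v) := by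
  simp [hmul]

lemma hmul_wrd (u v : List M) : hmul (wrd u) (wrd v) = har u v := by
  rw [wrd, wrd, hmul_single_single, one_mul, one_smul]
  rfl

lemma hmul_add_left (f₁ f₂ g : H M) : hmul (f₁ + f₂) g = hmul f₁ g + hmul f₂ g := by
  simp [hmul, Finsupp.sum_add_index', add_mul, add_smul, Finsupp.sum_add]

lemma hmul_add_right (f g₁ g₂ : H M) : hmul f (g₁ + g₂) = hmul f g₁ + hmul f g₂ := by
  simp [hmul, Finsupp.sum_add_index', mul_add, add_smul, Finsupp.sum_add]

lemma hmul_smul_left (c : ℚ) (f g : H M) : hmul (c • f) g = c • hmul f g := by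
  simp [hmul, Finsupp.sum_smul_index', Finsupp.smul_sum, mul_smul]

lemma hmul_smul_right (c : ℚ) (f g : H M) : hmul f (c • g) = c • hmul f g := by
  simp [hmul, Finsupp.sum_smul_index', Finsupp.smul_sum, mul_smul, smul_comm c]

lemma hmul_zero_left (g : H M) : hmul 0 g = 0 := by
  simpa using hmul_smul_left 0 0 g

lemma hmul_zero_right (f : H M) : hmul f 0 = 0 := by
  simpa using hmul_smul_right 0 f 0

lemma hmul_sub_left (f₁ f₂ g : H M) : hmul (f₁ - f₂) g = hmul f₁ g - hmul f₂ g := by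
  rw [sub_eq_add_neg, hmul_add_left, ← neg_one_smul ℚ f₂, hmul_smul_left, neg_one_smul,
    ← sub_eq_add_neg]

lemma hmul_sub_right (f g₁ g₂ : H M) : hmul f (g₁ - g₂) = hmul f g₁ - hmul f g₂ := by
  rw [sub_eq_add_neg, hmul_add_right, ← neg_one_smul ℚ g₂, hmul_smul_right, neg_one_smul,
    ← sub_eq_add_neg]

lemma one_hmul (f : H M) : hmul 1 f = f := by
  induction f using MonoidAlgebra.induction_linear with
  | zero => exact hmul_zero_right 1
  | add f g hf hg => rw [hmul_add_right, hf, hg]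
  | single w c =>
    rw [MonoidAlgebra.one_def, hmul_single_single, one_mul, FreeMonoid.toList_one, har_nil_left,
      single_eq_smul_wrd]

lemma hmul_one (f : H M) : hmul f 1 = f := by
  induction f using MonoidAlgebra.induction_linear with
  | zero => exact hmul_zero_left 1
  | add f g hf hg => rw [hmul_add_left, hf, hg]
  | single w c =>
    rw [MonoidAlgebra.one_def, hmul_single_single, mul_one, FreeMonoid.toList_one, har_nil_right,
      single_eq_smul_wrd]

lemma hmul_e_mul_e_mul (a b : M) (p q : H M) :
    hmul (e a * p) (e b * q)
      = e (a * b) * (hmul p (e b * q) + hmul (e a * p) q - e 0 * hmul p q) := by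
  induction p using MonoidAlgebra.induction_linear with
  | zero => simp [hmul_zero_left]
  | add p₁ p₂ h₁ h₂ =>
    simp only [mul_add, hmul_add_left, h₁, h₂]
    noncomm_ring
  | single u c =>
    induction q using MonoidAlgebra.induction_linear with
    | zero => simp [hmul_zero_right]
    | add q₁ q₂ h₁ h₂ =>
      simp only [mul_add, hmul_add_right, h₁, h₂]
      noncomm_ring
    | single v c' =>
      rw [e_mul_single, e_mul_single, single_eq_smul_wrd, single_eq_smul_wrd]
      simp only [hmul_smul_left, hmul_smul_right, hmul_wrd, har_cons_cons, mul_add, mul_sub,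
        smul_add, smul_sub, mul_smul_comm]

lemma hmul_e_zero_mul (p q : H M) : hmul (e 0 * p) q = e 0 * hmul p q := by
  induction p using MonoidAlgebra.induction_linear with
  | zero => simp [hmul_zero_left]
  | add p₁ p₂ h₁ h₂ => simp only [mul_add, hmul_add_left, h₁, h₂]
  | single u c =>
    induction q using MonoidAlgebra.induction_linear with
    | zero => simp [hmul_zero_right]
    | add q₁ q₂ h₁ h₂ => simp only [mul_add, hmul_add_right, h₁, h₂]
    | single v c' =>
      rw [e_mul_single, single_eq_smul_wrd, single_eq_smul_wrd]
      simp only [hmul_smul_left, hmul_smul_right, hmul_wrd, har_zero_cons, mul_smul_comm]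

lemma hmul_mul_e_zero (p q : H M) : hmul p (e 0 * q) = e 0 * hmul p q := by
  induction p using MonoidAlgebra.induction_linear with
  | zero => simp [hmul_zero_left]
  | add p₁ p₂ h₁ h₂ => simp only [mul_add, hmul_add_left, h₁, h₂]
  | single u c =>
    induction q using MonoidAlgebra.induction_linear with
    | zero => simp [hmul_zero_right]
    | add q₁ q₂ h₁ h₂ => simp only [mul_add, hmul_add_right, h₁, h₂]
    | single v c' =>
      rw [e_mul_single, single_eq_smul_wrd, single_eq_smul_wrd]
      simp only [hmul_smul_left, hmul_smul_right, hmul_wrd, har_cons_zero, mul_smul_comm]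

noncomputable def hmulAssociator (f g h : H M) : H M := hmul (hmul f g) h - hmul f (hmul g h)

lemma hmulAssociator_e_mul (a b c : M) (p q r : H M) :
    hmulAssociator (e a * p) (e b * q) (e c * r)
      = e (a * b * c) *
          (hmulAssociator p (e b * q) (e c * r) + hmulAssociator (e a * p) q (e c * r)
            + hmulAssociator (e a * p) (e b * q) r
            - e 0 * (hmulAssociator p q (e c * r) + hmulAssociator p (e b * q) r
              + hmulAssociator (e a * p) q r)
            + e 0 * (e 0 * hmulAssociator p q r)) := by
  simp only [hmulAssociator, hmul_e_mul_e_mul, hmul_add_left, hmul_add_right, hmul_sub_left,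
    hmul_sub_right, hmul_e_zero_mul, hmul_mul_e_zero, mul_assoc]
  noncomm_ring

lemma hmulAssociator_wrd : (u v w : List M) → hmulAssociator (wrd u) (wrd v) (wrd w) = 0
  | [], _, _ => by simp [hmulAssociator, wrd, ← MonoidAlgebra.one_def, one_hmul]
  | _, [], _ => by simp [hmulAssociator, wrd, ← MonoidAlgebra.one_def, one_hmul, hmul_one]
  | _, _, [] => by simp [hmulAssociator, wrd, ← MonoidAlgebra.one_def, hmul_one]
  | a :: u, b :: v, c :: w => by
    rw [wrd_cons a, wrd_cons b, wrd_cons c, hmulAssociator_e_mul]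
    simp only [← wrd_cons, hmulAssociator_wrd u (b :: v) (c :: w),
      hmulAssociator_wrd (a :: u) v (c :: w), hmulAssociator_wrd (a :: u) (b :: v) w,
      hmulAssociator_wrd u v (c :: w), hmulAssociator_wrd u (b :: v) w,
      hmulAssociator_wrd (a :: u) v w, hmulAssociator_wrd u v w]
    simp
termination_by u v w => u.length + v.length + w.length

lemma hmul_assoc (f g h : H M) : hmul (hmul f g) h = hmul f (hmul g h) := by
  induction f using MonoidAlgebra.induction_linear with
  | zero => simp [hmul_zero_left]
  | add f₁ f₂ h₁ h₂ => simp only [hmul_add_left, h₁, h₂]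
  | single u a =>
    induction g using MonoidAlgebra.induction_linear with
    | zero => simp [hmul_zero_left, hmul_zero_right]
    | add g₁ g₂ h₁ h₂ => simp only [hmul_add_left, hmul_add_right, h₁, h₂]
    | single v b =>
      induction h using MonoidAlgebra.induction_linear with
      | zero => simp [hmul_zero_right]
      | add h₁ h₂ e₁ e₂ => simp only [hmul_add_right, e₁, e₂]
      | single w c =>
        simp only [single_eq_smul_wrd, hmul_smul_left, hmul_smul_right,
          sub_eq_zero.mp (hmulAssociator_wrd _ _ _)]

lemma hmul_wrd_comm {u v : List M} (h : ∀ a ∈ u, ∀ b ∈ v, Commute a b) :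
    hmul (wrd u) (wrd v) = hmul (wrd v) (wrd u) := by
  rw [hmul_wrd, hmul_wrd, har_comm u v h]

/-- `𝔥_{M,∗}`: a type synonym for `𝔥_M` whose multiplication is the harmonic product. -/
def HStar (M : Type*) [MonoidWithZero M] : Type _ := H M

noncomputable instance : AddCommGroup (HStar M) := inferInstanceAs (AddCommGroup (H M))

noncomputable instance : Module ℚ (HStar M) := inferInstanceAs (Module ℚ (H M))

noncomputable instance : Ring (HStar M) where
  mul := hmul (M := M)
  left_distrib := hmul_add_right
  right_distrib := hmul_add_left
  zero_mul := hmul_zero_left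
  mul_zero := hmul_zero_right
  mul_assoc := hmul_assoc
  one := (1 : H M)
  one_mul := one_hmul
  mul_one := hmul_one

noncomputable instance : Algebra ℚ (HStar M) :=
  Algebra.ofModule (hmul_smul_left (M := M)) (fun c f g => hmul_smul_right (M := M) c f g)

section Order

open PowerSeries

variable {A : Type*} [Semiring A]

lemma coeff_mul_congr {f f' g g' : A⟦X⟧} {n : ℕ} (hf : ∀ i ≤ n, coeff i f = coeff i f')
    (hg : ∀ i ≤ n, coeff i g = coeff i g') : coeff n (f * g) = coeff n (f' * g') := by
  simp only [coeff_mul]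
  refine sum_congr rfl fun ij hij => ?_
  rw [HasAntidiagonal.mem_antidiagonal] at hij
  rw [hf ij.1 (by omega), hg ij.2 (by omega)]

lemma coeff_pow_mul_pow_eq_zero {F G : A⟦X⟧} (hF : constantCoeff F = 0)
    (hG : constantCoeff G = 0) {n p q : ℕ} (h : n < p + q) : coeff n (F ^ p * G ^ q) = 0 := by
  refine coeff_of_lt_order n (lt_of_lt_of_le ?_ (le_order_mul _ _))
  calc (n : ℕ∞) < p + q := by exact_mod_cast h
    _ ≤ _ := add_le_add (le_order_pow_of_constantCoeff_eq_zero p hF)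
      (le_order_pow_of_constantCoeff_eq_zero q hG)

lemma coeff_pow_eq_zero {F : A⟦X⟧} (hF : constantCoeff F = 0) {n p : ℕ} (h : n < p) :
    coeff n (F ^ p) = 0 := by
  simpa using coeff_pow_mul_pow_eq_zero hF hF (q := 0) h

end Order

section Exp

open PowerSeries Nat

variable {A : Type*} [Ring A] [Algebra ℚ A]

noncomputable def expTrunc (N : ℕ) (F : A⟦X⟧) : A⟦X⟧ :=
  ∑ m ∈ range (N + 1), (m ! : ℚ)⁻¹ • F ^ m

lemma coeff_expTrunc_of_le {F : A⟦X⟧} (hF : constantCoeff F = 0) {n N : ℕ} (h : n ≤ N) :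
    coeff n (expTrunc N F) = coeff n (expTrunc n F) := by
  simp only [expTrunc, map_sum]
  refine (sum_subset (range_subset_range.2 (by omega)) fun m _ hm => ?_).symm
  rw [mem_range, not_lt] at hm
  rw [coeff_smul, coeff_pow_eq_zero hF hm, smul_zero]

lemma expTrunc_add {F G : A⟦X⟧} (h : Commute F G) (N : ℕ) :
    expTrunc N (F + G) = ∑ p ∈ range (N + 1), ∑ q ∈ range (N + 1 - p),
      ((p ! : ℚ)⁻¹ * (q ! : ℚ)⁻¹) • (F ^ p * G ^ q) := by
  rw [expTrunc, ← sum_range_diag_flip]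
  refine sum_congr rfl fun m _ => ?_
  rw [h.add_pow, smul_sum]
  refine sum_congr rfl fun p hp => ?_
  have hpm : p ≤ m := by simp at hp; omega
  rw [← nsmul_eq_mul', ← Nat.cast_smul_eq_nsmul ℚ, smul_smul, cast_choose ℚ hpm]
  field_simp

lemma expTrunc_mul_expTrunc (F G : A⟦X⟧) (N : ℕ) :
    expTrunc N F * expTrunc N G = ∑ p ∈ range (N + 1), ∑ q ∈ range (N + 1),
      ((p ! : ℚ)⁻¹ * (q ! : ℚ)⁻¹) • (F ^ p * G ^ q) := by
  simp only [expTrunc, sum_mul_sum, smul_mul_smul]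

lemma coeff_expTrunc_add {F G : A⟦X⟧} (hF : constantCoeff F = 0) (hG : constantCoeff G = 0)
    (h : Commute F G) (N : ℕ) :
    coeff N (expTrunc N (F + G)) = coeff N (expTrunc N F * expTrunc N G) := by
  rw [expTrunc_add h, expTrunc_mul_expTrunc, map_sum, map_sum]
  refine sum_congr rfl fun p hp => ?_
  rw [map_sum, map_sum]
  refine sum_subset (range_subset_range.2 (by omega)) fun q hq hq' => ?_
  simp only [mem_range] at hp hq hq'
  rw [coeff_smul, coeff_pow_mul_pow_eq_zero hF hG (by omega), smul_zero]

end Exp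

section Series

open PowerSeries

noncomputable def toSeries (f : ℕ → H M) : (HStar M)⟦X⟧ := PowerSeries.mk f

lemma coeff_toSeries (f : ℕ → H M) (n : ℕ) : coeff n (toSeries f) = f n :=
  coeff_mk n f

lemma constantCoeff_toSeries {f : ℕ → H M} (hf : f 0 = 0) : constantCoeff (toSeries f) = 0 :=
  constantCoeff_mk.trans hf

lemma toSeries_add (f g : ℕ → H M) : toSeries (f + g) = toSeries f + toSeries g := by
  ext n
  simp only [coeff_toSeries, map_add]
  rfl

lemma toSeries_hmulPS (f g : ℕ → H M) : toSeries (hmulPS f g) = toSeries f * toSeries g := by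
  ext n
  rw [coeff_toSeries, coeff_mul, Finset.Nat.sum_antidiagonal_eq_sum_range_succ_mk]
  simp only [coeff_toSeries]
  rfl

lemma toSeries_psPow (f : ℕ → H M) (m : ℕ) : toSeries (psPow f m) = toSeries f ^ m := by
  induction m with
  | zero =>
    ext n
    rw [coeff_toSeries, pow_zero, coeff_one]
    rfl
  | succ m ih => rw [psPow, toSeries_hmulPS, ih, pow_succ']

lemma expPS_eq_coeff_expTrunc (f : ℕ → H M) (n : ℕ) :
    expPS f n = coeff (R := HStar M) n (expTrunc n (toSeries f)) := by
  simp only [expPS, expTrunc, map_sum, coeff_smul, ← toSeries_psPow, coeff_toSeries]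
  rfl

lemma commute_toSeries {f g : ℕ → H M} (h : ∀ i j, hmul (f i) (g j) = hmul (g j) (f i)) :
    Commute (toSeries f) (toSeries g) := by
  ext n
  rw [coeff_mul, coeff_mul, ← Finset.Nat.sum_antidiagonal_swap]
  refine sum_congr rfl fun ij _ => ?_
  simp only [coeff_toSeries, Prod.fst_swap, Prod.snd_swap]
  exact h _ _

lemma expPS_add {f g : ℕ → H M} (hf : f 0 = 0) (hg : g 0 = 0)
    (h : ∀ i j, hmul (f i) (g j) = hmul (g j) (f i)) (n : ℕ) :
    expPS (f + g) n = hmulPS (expPS f) (expPS g) n := by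
  have hF := constantCoeff_toSeries hf
  have hG := constantCoeff_toSeries hg
  rw [expPS_eq_coeff_expTrunc, toSeries_add, coeff_expTrunc_add hF hG (commute_toSeries h),
    ← coeff_toSeries (hmulPS _ _), toSeries_hmulPS]
  refine coeff_mul_congr (A := HStar M) (fun i hi => ?_) (fun i hi => ?_) <;>
    rw [coeff_toSeries, expPS_eq_coeff_expTrunc, coeff_expTrunc_of_le ‹_› hi]

lemma psPow_twist (c : ℚ) (f : ℕ → H M) (m n : ℕ) :
    psPow (fun d => c ^ d • f d) m n = c ^ n • psPow f m n := by
  induction m generalizing n with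
  | zero => by_cases hn : n = 0 <;> simp [psPow, hn]
  | succ m ih =>
    simp only [psPow, hmulPS, smul_sum]
    refine sum_congr rfl fun i hi => ?_
    have hin : i ≤ n := by simp at hi; omega
    rw [ih, hmul_smul_left, hmul_smul_right, smul_smul, ← pow_add, Nat.add_sub_cancel' hin]

lemma expPS_twist (c : ℚ) (f : ℕ → H M) (n : ℕ) :
    expPS (fun d => c ^ d • f d) n = c ^ n • expPS f n := by
  simp only [expPS, psPow_twist, smul_sum, smul_comm (c ^ n)]

end Series

lemma e_pow (a : M) (n : ℕ) : e a ^ n = wrd (List.replicate n a) := by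
  induction n with
  | zero => rfl
  | succ n ih => rw [pow_succ', ih, List.replicate_succ, wrd_cons]

lemma s_eq_wrd (z : M) (k : ℕ) : s z k = wrd (z :: List.replicate (k - 1) 0) := by
  rw [s, e_pow, wrd_cons]

lemma hmul_s_pow_comm (z : M) (i j k l : ℕ) :
    hmul (s (z ^ i) k) (s (z ^ j) l) = hmul (s (z ^ j) l) (s (z ^ i) k) := by
  rw [s_eq_wrd, s_eq_wrd]
  refine hmul_wrd_comm fun a ha b hb => ?_
  simp only [List.mem_cons, List.mem_replicate] at ha hb
  rcases ha with rfl | ⟨-, rfl⟩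
  · rcases hb with rfl | ⟨-, rfl⟩
    · exact Commute.pow_pow_self z i j
    · exact Commute.zero_right _
  · exact Commute.zero_left _

lemma hmul_gexp_comm (z : M) (k i j : ℕ) :
    hmul (gexp z k i) (gexp z k j) = hmul (gexp z k j) (gexp z k i) := by
  unfold gexp
  split_ifs <;> simp only [hmul_smul_left, hmul_smul_right, hmul_zero_left, hmul_zero_right,
    hmul_s_pow_comm z (i / k), smul_comm (((i / k : ℕ) : ℚ)⁻¹), smul_zero]

lemma gexp_zero (z : M) (k : ℕ) : gexp z k 0 = 0 := by
  simp [gexp]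

lemma gexp_sq_two (z : M) :
    gexp (z ^ 2) 2 = gexp z 1 + fun d => (-1 : ℚ) ^ d • gexp z 1 d := by
  ext1 d
  rcases Nat.even_or_odd' d with ⟨m, rfl | rfl⟩
  · rcases Nat.eq_zero_or_pos m with rfl | hm
    · simp [gexp]
    · have hd : 2 * m ≠ 0 := by omega
      rw [Pi.add_apply, gexp, gexp, if_pos ⟨hd, dvd_mul_right 2 m⟩, if_pos ⟨hd, one_dvd _⟩,
        (even_two_mul m).neg_one_pow, one_smul, ← add_smul, ← pow_mul, Nat.div_one,
        Nat.mul_div_cancel_left m two_pos]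
      congr 1
      push_cast
      field_simp
      norm_num
  · have h2 : ¬ 2 ∣ 2 * m + 1 := by omega
    simp [gexp, h2, pow_succ]

lemma SRcoef_one (z : M) : SRcoef z 1 = expPS (gexp z 1) := by
  ext1 d
  simp [SRcoef]

/-- `S^R_{z²,2}(x) = x · (S^R_{z,1}(x) ∗ S^R_{z,1}(−x))` in `𝔥_{M,∗}⟦x⟧`. -/
theorem SR_square (M : Type*) [MonoidWithZero M] (z : M) (d : ℕ) :
    SRcoef (z ^ 2) 2 d =
      if d = 0 then 0
      else hmulPS (SRcoef z 1) (fun n => ((-1 : ℚ)) ^ n • SRcoef z 1 n) (d - 1) := by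
  rcases d with _ | d
  · simp [SRcoef]
  have htwist : (fun n => (-1 : ℚ) ^ n • SRcoef z 1 n)
      = expPS (fun n => (-1 : ℚ) ^ n • gexp z 1 n) := by
    ext1 n
    rw [SRcoef_one, expPS_twist]
  have hcomm (i j : ℕ) : hmul (gexp z 1 i) ((-1 : ℚ) ^ j • gexp z 1 j)
      = hmul ((-1 : ℚ) ^ j • gexp z 1 j) (gexp z 1 i) := by
    rw [hmul_smul_left, hmul_smul_right, hmul_gexp_comm]
  rw [if_neg d.succ_ne_zero, SRcoef, if_pos (by omega), htwist, SRcoef_one, gexp_sq_two,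
    expPS_add (gexp_zero z 1) (by simp [gexp_zero]) hcomm]
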